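/- arXiv:1602.06991 — 3 statements merged into one kernel-verified Lean document; each statement's English description precedes it below -/
import Mathlib

section
/- A metric space M satisfies condition (C) (equivalently, has connected Higson corona) if and only if its first coarse cohomology group HX¹(M) is trivial; explicitly, if and only if every function f : M × M → ℤ whose support is cocontrolled and which satisfies the cocycle identity f(b,c) − f(a,c) + f(a,b) = 0 for all a, b, c ∈ M can be written as f(a,b) = g(a) − g(b) for some function g : M → ℤ with bounded support. -/
open Bornology

def Bornologous {X Y : Type*} [PseudoMetricSpace X] [PseudoMetricSpace Y] (f : X → Y) : Prop :=
  ∀ R : ℝ, 0 < R → ∃ S : ℝ, 0 < S ∧ ∀ x x' : X, dist x x' ≤ R → dist (f x) (f x') ≤ S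

def ProperMap {X Y : Type*} [PseudoMetricSpace X] [PseudoMetricSpace Y] (f : X → Y) : Prop :=
  ∀ B : Set Y, IsBounded B → IsBounded (f ⁻¹' B)

def IsCoarse {X Y : Type*} [PseudoMetricSpace X] [PseudoMetricSpace Y] (f : X → Y) : Prop :=
  Bornologous f ∧ ProperMap f

def Close {X Y : Type*} [PseudoMetricSpace Y] (f g : X → Y) : Prop :=
  ∃ R : ℝ, 0 < R ∧ ∀ x : X, dist (f x) (g x) ≤ R

def coprodDist {X Y : Type*} [MetricSpace X] [MetricSpace Y] (x₀ : X) (y₀ : Y) :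
    X ⊕ Y → X ⊕ Y → ℝ
  | Sum.inl a, Sum.inl b => dist a b
  | Sum.inl a, Sum.inr b => dist a x₀ + 1 + dist y₀ b
  | Sum.inr a, Sum.inl b => dist b x₀ + 1 + dist y₀ a
  | Sum.inr a, Sum.inr b => dist a b

noncomputable def coprodMetric {X Y : Type*} [MetricSpace X] [MetricSpace Y]
    (x₀ : X) (y₀ : Y) : MetricSpace (X ⊕ Y) where
  dist := coprodDist x₀ y₀
  dist_self := by rintro (a | a) <;> simp [coprodDist]
  dist_comm := fun p q => by
    match p, q with
    | Sum.inl a, Sum.inl b => exact dist_comm a b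
    | Sum.inl a, Sum.inr b => rfl
    | Sum.inr a, Sum.inl b => rfl
    | Sum.inr a, Sum.inr b => exact dist_comm a b
  dist_triangle := fun p q r => by
    match p, q, r with
    | Sum.inl a, Sum.inl b, Sum.inl c => exact dist_triangle a b c
    | Sum.inl a, Sum.inl b, Sum.inr c =>
      show dist a x₀ + 1 + dist y₀ c ≤ dist a b + (dist b x₀ + 1 + dist y₀ c)
      have := dist_triangle a b x₀; linarith
    | Sum.inl a, Sum.inr b, Sum.inl c =>
      show dist a c ≤ (dist a x₀ + 1 + dist y₀ b) + (dist c x₀ + 1 + dist y₀ b)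
      have h1 := dist_triangle a x₀ c
      have h2 : dist x₀ c = dist c x₀ := dist_comm _ _
      have h3 := dist_nonneg (x := y₀) (y := b)
      linarith
    | Sum.inl a, Sum.inr b, Sum.inr c =>
      show dist a x₀ + 1 + dist y₀ c ≤ (dist a x₀ + 1 + dist y₀ b) + dist b c
      have := dist_triangle y₀ b c; linarith
    | Sum.inr a, Sum.inl b, Sum.inl c =>
      show dist c x₀ + 1 + dist y₀ a ≤ (dist b x₀ + 1 + dist y₀ a) + dist b c
      have h1 := dist_triangle c b x₀
      have h2 : dist c b = dist b c := dist_comm _ _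
      linarith
    | Sum.inr a, Sum.inl b, Sum.inr c =>
      show dist a c ≤ (dist b x₀ + 1 + dist y₀ a) + (dist b x₀ + 1 + dist y₀ c)
      have h1 := dist_triangle a y₀ c
      have h2 : dist a y₀ = dist y₀ a := dist_comm _ _
      have h3 := dist_nonneg (x := b) (y := x₀)
      linarith
    | Sum.inr a, Sum.inr b, Sum.inl c =>
      show dist c x₀ + 1 + dist y₀ a ≤ dist a b + (dist c x₀ + 1 + dist y₀ b)
      have h1 := dist_triangle y₀ b a
      have h2 : dist b a = dist a b := dist_comm _ _
      linarith
    | Sum.inr a, Sum.inr b, Sum.inr c => exact dist_triangle a b c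
  eq_of_dist_eq_zero := fun {p q} h => by
    match p, q, h with
    | Sum.inl a, Sum.inl b, h => exact congrArg Sum.inl (eq_of_dist_eq_zero h)
    | Sum.inl a, Sum.inr b, h =>
      exfalso
      have h1 := dist_nonneg (x := a) (y := x₀)
      have h2 := dist_nonneg (x := y₀) (y := b)
      have h' : dist a x₀ + 1 + dist y₀ b = 0 := h
      linarith
    | Sum.inr a, Sum.inl b, h =>
      exfalso
      have h1 := dist_nonneg (x := b) (y := x₀)
      have h2 := dist_nonneg (x := y₀) (y := a)
      have h' : dist b x₀ + 1 + dist y₀ a = 0 := h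
      linarith
    | Sum.inr a, Sum.inr b, h => exact congrArg Sum.inr (eq_of_dist_eq_zero h)

/-- Condition (C): every coarse map into a coarse coproduct factors, up to closeness,
through one of the coproduct injections. -/
def CondC (X : Type u) [MetricSpace X] : Prop :=
  ∀ (Y Z : Type u) [MetricSpace Y] [MetricSpace Z] (y₀ : Y) (z₀ : Z) (f : X → Y ⊕ Z),
    letI := coprodMetric y₀ z₀
    IsCoarse f →
      (∃ g : X → Y, IsCoarse g ∧ Close (Sum.inl ∘ g) f) ∨
      (∃ h : X → Z, IsCoarse h ∧ Close (Sum.inr ∘ h) f)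

/-- A subset `E ⊆ M × M` is *controlled* if the set of distances of its pairs is bounded. -/
def ControlledSet {M : Type*} [PseudoMetricSpace M] (E : Set (M × M)) : Prop :=
  ∃ C : ℝ, ∀ p ∈ E, dist p.1 p.2 ≤ C

/-- A subset of `M × M` is *bounded* if both of its coordinate projections are bounded. -/
def BoundedRel {M : Type*} [PseudoMetricSpace M] (E : Set (M × M)) : Prop :=
  IsBounded (Prod.fst '' E) ∧ IsBounded (Prod.snd '' E)

/-- A subset `D ⊆ M × M` is *cocontrolled* if its intersection with every controlled set is
bounded. -/
def Cocontrolled {M : Type*} [PseudoMetricSpace M] (D : Set (M × M)) : Prop :=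
  ∀ E : Set (M × M), ControlledSet E → BoundedRel (D ∩ E)
section
variable {Y Z : Type*} [MetricSpace Y] [MetricSpace Z] (y₀ : Y) (z₀ : Z)

lemma coprod_dist_inl_inl (a b : Y) :
    letI := coprodMetric y₀ z₀
    dist (Sum.inl a : Y ⊕ Z) (Sum.inl b) = dist a b := rfl

lemma coprod_dist_inr_inr (a b : Z) :
    letI := coprodMetric y₀ z₀
    dist (Sum.inr a : Y ⊕ Z) (Sum.inr b) = dist a b := rfl

lemma coprod_dist_inl_inr (a : Y) (b : Z) :
    letI := coprodMetric y₀ z₀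
    dist (Sum.inl a : Y ⊕ Z) (Sum.inr b) = dist a y₀ + 1 + dist z₀ b := rfl

lemma coprod_dist_inr_inl (a : Z) (b : Y) :
    letI := coprodMetric y₀ z₀
    dist (Sum.inr a : Y ⊕ Z) (Sum.inl b) = dist b y₀ + 1 + dist z₀ a := rfl

end

lemma exists_bound_on_bounded {X W : Type*} [PseudoMetricSpace X] [PseudoMetricSpace W]
    {F : X → W} (hb : Bornologous F) {A : Set X} (hA : IsBounded A) (c : W) :
    ∃ D : ℝ, ∀ x ∈ A, dist (F x) c ≤ D := by
  rcases A.eq_empty_or_nonempty with h | ⟨w₀, hw₀⟩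
  · exact ⟨0, by simp [h]⟩
  · obtain ⟨r, hr⟩ := hA.subset_closedBall w₀
    obtain ⟨S, -, hS⟩ := hb (max r 1) (lt_max_of_lt_right one_pos)
    refine ⟨S + dist (F w₀) c, fun x hx => ?_⟩
    have h1 : dist x w₀ ≤ max r 1 :=
      le_trans (by simpa using hr hx) (le_max_left _ _)
    calc dist (F x) c ≤ dist (F x) (F w₀) + dist (F w₀) c := dist_triangle _ _ _
      _ ≤ S + dist (F w₀) c := by linarith [hS x w₀ h1]
lemma factor_left {M Y Z : Type*} [MetricSpace M] [MetricSpace Y] [MetricSpace Z]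
    (y₀ : Y) (z₀ : Z) (F : M → Y ⊕ Z) :
    letI := coprodMetric y₀ z₀
    IsCoarse F → IsBounded {x : M | ∃ b, F x = Sum.inr b} →
      ∃ g : M → Y, IsCoarse g ∧ Close (Sum.inl ∘ g) F := by
  letI := coprodMetric y₀ z₀
  intro hF hW
  set g : M → Y := fun x => Sum.elim id (fun _ => y₀) (F x) with hg
  obtain ⟨D, hD⟩ := exists_bound_on_bounded hF.1 hW (Sum.inl y₀ : Y ⊕ Z)
  have hclose : ∀ x, dist (Sum.inl (g x) : Y ⊕ Z) (F x) ≤ max D 1 := by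
    intro x
    rcases hFx : F x with a | b
    · simp only [hg, hFx, Sum.elim_inl, id]
      rw [coprod_dist_inl_inl]
      simp [le_max_iff]
    · have hx : x ∈ {x : M | ∃ b, F x = Sum.inr b} := ⟨b, hFx⟩
      have h1 : dist (F x) (Sum.inl y₀ : Y ⊕ Z) ≤ D := hD x hx
      rw [hFx, coprod_dist_inr_inl] at h1
      have hgx : g x = y₀ := by simp [hg, hFx]
      rw [hgx, coprod_dist_inl_inr]
      have := le_max_left D (1:ℝ)
      linarith
  refine ⟨g, ⟨?_, ?_⟩, ⟨max D 1, lt_max_of_lt_right one_pos, fun x => hclose x⟩⟩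
  · intro R hR
    obtain ⟨S, hS0, hS⟩ := hF.1 R hR
    refine ⟨S + 2 * max D 1, by positivity, fun x x' hxx => ?_⟩
    have : dist (g x) (g x') = dist (Sum.inl (g x) : Y ⊕ Z) (Sum.inl (g x')) :=
      (coprod_dist_inl_inl y₀ z₀ _ _).symm
    rw [this]
    calc dist (Sum.inl (g x) : Y ⊕ Z) (Sum.inl (g x'))
        ≤ dist (Sum.inl (g x) : Y ⊕ Z) (F x) + dist (F x) (F x')
            + dist (F x') (Sum.inl (g x') : Y ⊕ Z) := dist_triangle4 _ _ _ _
      _ ≤ max D 1 + S + max D 1 := by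
          have h1 := hclose x
          have h2 := hclose x'
          rw [dist_comm] at h2
          linarith [hS x x' hxx]
      _ = S + 2 * max D 1 := by ring
  · intro B hB
    rcases B.eq_empty_or_nonempty with h | ⟨y₁, hy₁⟩
    · simp [h]
    · obtain ⟨r, hr⟩ := hB.subset_closedBall y₁
      have hsub : g ⁻¹' B ⊆ F ⁻¹' Metric.closedBall (Sum.inl y₁ : Y ⊕ Z) (max D 1 + r) := by
        intro x hx
        have h1 : dist (g x) y₁ ≤ r := by simpa using hr hx
        have h2 : dist (Sum.inl (g x) : Y ⊕ Z) (Sum.inl y₁) ≤ r := by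
          rw [coprod_dist_inl_inl]; exact h1
        have h3 : dist (F x) (Sum.inl y₁ : Y ⊕ Z) ≤ max D 1 + r := by
          calc dist (F x) (Sum.inl y₁ : Y ⊕ Z)
              ≤ dist (F x) (Sum.inl (g x) : Y ⊕ Z) + dist (Sum.inl (g x) : Y ⊕ Z) (Sum.inl y₁) :=
                dist_triangle _ _ _
            _ ≤ max D 1 + r := by
                have := hclose x
                rw [dist_comm] at this
                linarith
        simpa [Metric.mem_closedBall] using h3
      exact (hF.2 _ Metric.isBounded_closedBall).subset hsub

lemma factor_right {M Y Z : Type*} [MetricSpace M] [MetricSpace Y] [MetricSpace Z]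
    (y₀ : Y) (z₀ : Z) (F : M → Y ⊕ Z) :
    letI := coprodMetric y₀ z₀
    IsCoarse F → IsBounded {x : M | ∃ a, F x = Sum.inl a} →
      ∃ h : M → Z, IsCoarse h ∧ Close (Sum.inr ∘ h) F := by
  letI := coprodMetric y₀ z₀
  intro hF hW
  set g : M → Z := fun x => Sum.elim (fun _ => z₀) id (F x) with hg
  obtain ⟨D, hD⟩ := exists_bound_on_bounded hF.1 hW (Sum.inr z₀ : Y ⊕ Z)
  have hclose : ∀ x, dist (Sum.inr (g x) : Y ⊕ Z) (F x) ≤ max D 1 := by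
    intro x
    rcases hFx : F x with a | b
    · have hx : x ∈ {x : M | ∃ a, F x = Sum.inl a} := ⟨a, hFx⟩
      have h1 : dist (F x) (Sum.inr z₀ : Y ⊕ Z) ≤ D := hD x hx
      rw [hFx, coprod_dist_inl_inr] at h1
      have hgx : g x = z₀ := by simp [hg, hFx]
      rw [hgx, coprod_dist_inr_inl]
      have := le_max_left D (1:ℝ)
      linarith
    · simp only [hg, hFx, Sum.elim_inr, id]
      rw [coprod_dist_inr_inr]
      simp [le_max_iff]
  refine ⟨g, ⟨?_, ?_⟩, ⟨max D 1, lt_max_of_lt_right one_pos, fun x => hclose x⟩⟩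
  · intro R hR
    obtain ⟨S, hS0, hS⟩ := hF.1 R hR
    refine ⟨S + 2 * max D 1, by positivity, fun x x' hxx => ?_⟩
    have : dist (g x) (g x') = dist (Sum.inr (g x) : Y ⊕ Z) (Sum.inr (g x')) :=
      (coprod_dist_inr_inr y₀ z₀ _ _).symm
    rw [this]
    calc dist (Sum.inr (g x) : Y ⊕ Z) (Sum.inr (g x'))
        ≤ dist (Sum.inr (g x) : Y ⊕ Z) (F x) + dist (F x) (F x')
            + dist (F x') (Sum.inr (g x') : Y ⊕ Z) := dist_triangle4 _ _ _ _
      _ ≤ max D 1 + S + max D 1 := by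
          have h1 := hclose x
          have h2 := hclose x'
          rw [dist_comm] at h2
          linarith [hS x x' hxx]
      _ = S + 2 * max D 1 := by ring
  · intro B hB
    rcases B.eq_empty_or_nonempty with h | ⟨y₁, hy₁⟩
    · simp [h]
    · obtain ⟨r, hr⟩ := hB.subset_closedBall y₁
      have hsub : g ⁻¹' B ⊆ F ⁻¹' Metric.closedBall (Sum.inr y₁ : Y ⊕ Z) (max D 1 + r) := by
        intro x hx
        have h1 : dist (g x) y₁ ≤ r := by simpa using hr hx
        have h2 : dist (Sum.inr (g x) : Y ⊕ Z) (Sum.inr y₁) ≤ r := by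
          rw [coprod_dist_inr_inr]; exact h1
        have h3 : dist (F x) (Sum.inr y₁ : Y ⊕ Z) ≤ max D 1 + r := by
          calc dist (F x) (Sum.inr y₁ : Y ⊕ Z)
              ≤ dist (F x) (Sum.inr (g x) : Y ⊕ Z) + dist (Sum.inr (g x) : Y ⊕ Z) (Sum.inr y₁) :=
                dist_triangle _ _ _
            _ ≤ max D 1 + r := by
                have := hclose x
                rw [dist_comm] at this
                linarith
        simpa [Metric.mem_closedBall] using h3
      exact (hF.2 _ Metric.isBounded_closedBall).subset hsub
lemma condC_split {M : Type u} [MetricSpace M] (hC : CondC M) (o : M) (g₀ : M → ℤ)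
    (hco : ∀ R : ℝ, 0 < R → ∃ r : ℝ, ∀ x y : M, g₀ x ≠ g₀ y → dist x y ≤ R →
      dist x o ≤ r ∧ dist y o ≤ r) (S : Set ℤ) :
    IsBounded {x : M | g₀ x ∈ S} ∨ IsBounded {x : M | g₀ x ∉ S} := by
  classical
  letI : MetricSpace (M ⊕ M) := coprodMetric o o
  set F : M → M ⊕ M := fun x => if g₀ x ∈ S then Sum.inl x else Sum.inr x with hFdef
  have hcoarse : IsCoarse F := by
    constructor
    · intro R hR
      obtain ⟨r, hr⟩ := hco R hR
      refine ⟨max R (r + r + 1), lt_max_of_lt_left hR, fun x x' hxx => ?_⟩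
      by_cases hx : g₀ x ∈ S <;> by_cases hx' : g₀ x' ∈ S
      · have : F x = Sum.inl x := by simp [hFdef, hx]
        have h2 : F x' = Sum.inl x' := by simp [hFdef, hx']
        rw [this, h2, coprod_dist_inl_inl]
        exact le_trans hxx (le_max_left _ _)
      · have hne : g₀ x ≠ g₀ x' := fun h => hx' (h ▸ hx)
        obtain ⟨h1, h2⟩ := hr x x' hne hxx
        have e1 : F x = Sum.inl x := by simp [hFdef, hx]
        have e2 : F x' = Sum.inr x' := by simp [hFdef, hx']
        rw [e1, e2, coprod_dist_inl_inr]
        have : dist o x' = dist x' o := dist_comm _ _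
        rw [this]
        refine le_trans ?_ (le_max_right _ _)
        linarith
      · have hne : g₀ x ≠ g₀ x' := fun h => hx (h ▸ hx')
        obtain ⟨h1, h2⟩ := hr x x' hne hxx
        have e1 : F x = Sum.inr x := by simp [hFdef, hx]
        have e2 : F x' = Sum.inl x' := by simp [hFdef, hx']
        rw [e1, e2, coprod_dist_inr_inl]
        have : dist o x = dist x o := dist_comm _ _
        rw [this]
        refine le_trans ?_ (le_max_right _ _)
        linarith
      · have e1 : F x = Sum.inr x := by simp [hFdef, hx]
        have e2 : F x' = Sum.inr x' := by simp [hFdef, hx']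
        rw [e1, e2, coprod_dist_inr_inr]
        exact le_trans hxx (le_max_left _ _)
    · intro B hB
      obtain ⟨ρ, hρ⟩ := hB.subset_closedBall (Sum.inl o : M ⊕ M)
      have hsub : F ⁻¹' B ⊆ Metric.closedBall o ρ := by
        intro x hx
        have h1 : dist (F x) (Sum.inl o : M ⊕ M) ≤ ρ := by simpa using hρ hx
        by_cases hxS : g₀ x ∈ S
        · rw [show F x = Sum.inl x by simp [hFdef, hxS], coprod_dist_inl_inl] at h1
          simpa using h1
        · rw [show F x = Sum.inr x by simp [hFdef, hxS], coprod_dist_inr_inl] at h1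
          have h2 : dist o x = dist x o := dist_comm _ _
          have h3 := dist_nonneg (x := o) (y := o)
          rw [h2] at h1
          simp only [Metric.mem_closedBall]
          linarith
      exact Metric.isBounded_closedBall.subset hsub
  rcases hC M M o o F hcoarse with ⟨g, hg, R₀, hR₀, hcl⟩ | ⟨h, hh, R₀, hR₀, hcl⟩
  · right
    have hsub : {x : M | g₀ x ∉ S} ⊆ Metric.closedBall o R₀ := by
      intro x hx
      have h1 := hcl x
      have e : F x = Sum.inr x := by simp only [hFdef]; exact if_neg hx
      simp only [Function.comp_apply] at h1
      rw [e, coprod_dist_inl_inr] at h1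
      have h2 : dist o x = dist x o := dist_comm _ _
      have h3 := dist_nonneg (x := g x) (y := o)
      rw [h2] at h1
      simp only [Metric.mem_closedBall]
      linarith
    exact Metric.isBounded_closedBall.subset hsub
  · left
    have hsub : {x : M | g₀ x ∈ S} ⊆ Metric.closedBall o R₀ := by
      intro x hx
      have h1 := hcl x
      have e : F x = Sum.inl x := by simp only [hFdef]; exact if_pos hx
      simp only [Function.comp_apply] at h1
      rw [e, coprod_dist_inr_inl] at h1
      have h3 := dist_nonneg (x := o) (y := h x)
      simp only [Metric.mem_closedBall]
      linarith
    exact Metric.isBounded_closedBall.subset hsub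
lemma exists_escape_seq {M : Type*} [MetricSpace M] (o : M) (g₀ : M → ℤ)
    (hA : ∀ k : ℤ, IsBounded {x : M | g₀ x = k})
    (hM : ¬ IsBounded (Set.univ : Set M)) :
    ∃ x : ℕ → M, (∀ n : ℕ, (n : ℝ) < dist (x n) o) ∧
      ∀ m n : ℕ, m < n → g₀ (x m) ≠ g₀ (x n) := by
  classical
  have key : ∀ (K : Finset ℤ) (c : ℝ), ∃ x : M, c < dist x o ∧ g₀ x ∉ K := by
    intro K c
    by_contra hcon
    push_neg at hcon
    apply hM
    have hsub : (Set.univ : Set M) ⊆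
        Metric.closedBall o c ∪ ⋃ k ∈ (K : Set ℤ), {x : M | g₀ x = k} := by
      intro x _
      by_cases hx : dist x o ≤ c
      · exact Or.inl (by simpa [Metric.mem_closedBall] using hx)
      · exact Or.inr (Set.mem_biUnion (by exact_mod_cast hcon x (lt_of_not_ge hx)) rfl)
    have hb : IsBounded (Metric.closedBall o c ∪ ⋃ k ∈ (K : Set ℤ), {x : M | g₀ x = k}) :=
      Metric.isBounded_closedBall.union
        ((Bornology.isBounded_biUnion K.finite_toSet).2 (fun k _ => hA k))
    exact hb.subset hsub
  choose pick hp1 hp2 using key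
  set q : ℕ → M × Finset ℤ := fun n =>
    Nat.rec (⟨pick ∅ 0, {g₀ (pick ∅ 0)}⟩)
      (fun n p => ⟨pick p.2 ((n : ℝ) + 1), insert (g₀ (pick p.2 ((n : ℝ) + 1))) p.2⟩) n
    with hq
  set x : ℕ → M := fun n => (q n).1 with hx
  set K : ℕ → Finset ℤ := fun n => (q n).2 with hK
  have hq0 : q 0 = ⟨pick ∅ 0, {g₀ (pick ∅ 0)}⟩ := rfl
  have hqs : ∀ n, q (n + 1) =
      ⟨pick (K n) ((n : ℝ) + 1), insert (g₀ (pick (K n) ((n : ℝ) + 1))) (K n)⟩ := fun n => rfl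
  have hxd : ∀ n : ℕ, (n : ℝ) < dist (x n) o := by
    intro n
    cases n with
    | zero => simpa [hx, hq0] using (hp1 ∅ 0)
    | succ n =>
        have := hp1 (K n) ((n : ℝ) + 1)
        have he : x (n + 1) = pick (K n) ((n : ℝ) + 1) := rfl
        rw [he]
        push_cast
        exact this
  have hmem : ∀ n, g₀ (x n) ∈ K n := by
    intro n
    cases n with
    | zero => simp [hx, hK, hq0]
    | succ n =>
        have he : x (n + 1) = pick (K n) ((n : ℝ) + 1) := rfl
        have he2 : K (n + 1) = insert (g₀ (pick (K n) ((n : ℝ) + 1))) (K n) := rfl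
        rw [he, he2]
        exact Finset.mem_insert_self _ _
  have hnotin : ∀ n, g₀ (x (n + 1)) ∉ K n := by
    intro n
    have he : x (n + 1) = pick (K n) ((n : ℝ) + 1) := rfl
    rw [he]
    exact hp2 (K n) _
  have hmono : ∀ m n : ℕ, m ≤ n → K m ⊆ K n := by
    have hstep : ∀ n, K n ⊆ K (n + 1) := by
      intro n
      have he2 : K (n + 1) = insert (g₀ (pick (K n) ((n : ℝ) + 1))) (K n) := rfl
      rw [he2]
      exact Finset.subset_insert _ _
    exact fun m n h => monotone_nat_of_le_succ hstep h
  refine ⟨x, hxd, fun m n hmn heq => ?_⟩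
  cases n with
  | zero => exact absurd hmn (Nat.not_lt_zero m)
  | succ p => exact hnotin p (heq ▸ hmono m p (Nat.lt_succ_iff.mp hmn) (hmem m))
/-- `M` satisfies condition (C) (equivalently, has connected Higson corona) iff
`HX¹(M)` is trivial: every integer-valued cocycle on `M × M` with cocontrolled support is the
coboundary of a function with bounded support. -/
theorem condC_iff_first_coarse_cohomology_trivial {M : Type u} [MetricSpace M] :
    CondC M ↔
      ∀ f : M × M → ℤ, Cocontrolled {p : M × M | f p ≠ 0} →
        (∀ a b c : M, f (b, c) - f (a, c) + f (a, b) = 0) →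
        ∃ g : M → ℤ, IsBounded {x : M | g x ≠ 0} ∧ ∀ a b : M, f (a, b) = g a - g b := by
  classical
  constructor
  · -- Condition (C) implies triviality of HX¹
    intro hC f hcoc hcyc
    by_cases hne : Nonempty M
    · obtain ⟨o⟩ := hne
      set g₀ : M → ℤ := fun x => f (x, o) with hg₀
      have hdiff : ∀ a b : M, f (a, b) = g₀ a - g₀ b := by
        intro a b
        have := hcyc a b o
        simp only [hg₀]
        omega
      suffices h : ∃ k : ℤ, IsBounded {x : M | g₀ x ≠ k} by
        obtain ⟨k, hk⟩ := h
        refine ⟨fun x => g₀ x - k, ?_, fun a b => by rw [hdiff a b]; ring⟩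
        have he : {x : M | g₀ x - k ≠ 0} = {x : M | g₀ x ≠ k} := by
          ext x; simp [sub_ne_zero]
        rw [he]; exact hk
      by_cases hbdd : IsBounded (Set.univ : Set M)
      · exact ⟨0, hbdd.subset (Set.subset_univ _)⟩
      · have hco : ∀ R : ℝ, 0 < R → ∃ r : ℝ, ∀ x y : M, g₀ x ≠ g₀ y → dist x y ≤ R →
            dist x o ≤ r ∧ dist y o ≤ r := by
          intro R hR
          have hE : ControlledSet {p : M × M | dist p.1 p.2 ≤ R} := ⟨R, fun p hp => hp⟩
          obtain ⟨h1, h2⟩ := hcoc _ hE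
          obtain ⟨r1, hr1⟩ := h1.subset_closedBall o
          obtain ⟨r2, hr2⟩ := h2.subset_closedBall o
          refine ⟨max r1 r2, fun x y hxy hdxy => ?_⟩
          have hfne : f (x, y) ≠ 0 := by rw [hdiff x y]; omega
          have hmem : ((x, y) : M × M) ∈ {p : M × M | f p ≠ 0} ∩ {p | dist p.1 p.2 ≤ R} :=
            ⟨hfne, hdxy⟩
          constructor
          · have := hr1 ⟨(x, y), hmem, rfl⟩
            exact le_trans (by simpa using this) (le_max_left _ _)
          · have := hr2 ⟨(x, y), hmem, rfl⟩
            exact le_trans (by simpa using this) (le_max_right _ _)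
        by_contra hno
        push_neg at hno
        have hA : ∀ k : ℤ, IsBounded {x : M | g₀ x = k} := by
          intro k
          rcases condC_split hC o g₀ hco {k} with h | h
          · have he : {x : M | g₀ x ∈ ({k} : Set ℤ)} = {x : M | g₀ x = k} := by
              ext x; simp
            rwa [he] at h
          · exfalso
            apply hno k
            have he : {x : M | g₀ x ∉ ({k} : Set ℤ)} = {x : M | g₀ x ≠ k} := by
              ext x; simp
            rwa [he] at h
        obtain ⟨xs, hxd, hdis⟩ := exists_escape_seq o g₀ hA hbdd
        set S : Set ℤ := {k | ∃ n : ℕ, k = g₀ (xs (2 * n))} with hS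
        have hcast : ∀ n : ℕ, (n : ℝ) ≤ ((2 * n : ℕ) : ℝ) := by
          intro n; push_cast; linarith [Nat.cast_nonneg (α := ℝ) n]
        rcases condC_split hC o g₀ hco S with h | h
        · obtain ⟨r, hr⟩ := h.subset_closedBall o
          obtain ⟨n, hn⟩ := exists_nat_gt r
          have hmem : xs (2 * n) ∈ {x : M | g₀ x ∈ S} := ⟨n, rfl⟩
          have hd := hxd (2 * n)
          have hle : dist (xs (2 * n)) o ≤ r := by simpa using hr hmem
          have := hcast n
          linarith
        · obtain ⟨r, hr⟩ := h.subset_closedBall o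
          obtain ⟨n, hn⟩ := exists_nat_gt r
          have hmem : xs (2 * n + 1) ∈ {x : M | g₀ x ∉ S} := by
            rintro ⟨m, hm⟩
            rcases lt_trichotomy (2 * n + 1) (2 * m) with hlt | heq | hgt
            · exact hdis _ _ hlt hm
            · omega
            · exact hdis _ _ hgt hm.symm
          have hd := hxd (2 * n + 1)
          have hle : dist (xs (2 * n + 1)) o ≤ r := by simpa using hr hmem
          have h1 := hcast n
          have h2 : ((2 * n : ℕ) : ℝ) ≤ ((2 * n + 1 : ℕ) : ℝ) := by push_cast; linarith
          linarith
    · refine ⟨fun _ => 0, ?_, fun a b => (hne ⟨a⟩).elim⟩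
      have he : {x : M | (0 : ℤ) ≠ 0} = ∅ := by simp
      rw [he]; exact Bornology.isBounded_empty
  · -- Triviality of HX¹ implies condition (C)
    intro hH Y Z instY instZ y₀ z₀ F
    letI := coprodMetric y₀ z₀
    intro hF
    set φ : M → ℤ := fun x => Sum.elim (fun _ => (0 : ℤ)) (fun _ => 1) (F x) with hφ
    set f : M × M → ℤ := fun p => φ p.1 - φ p.2 with hf
    have hφ01 : ∀ x, φ x = 0 ∨ φ x = 1 := by
      intro x; rcases hFx : F x with a | b <;> simp [hφ, hFx]
    have hcoc : Cocontrolled {p : M × M | f p ≠ 0} := by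
      rintro E ⟨C, hCE⟩
      obtain ⟨S, hS0, hS⟩ := hF.1 (max C 1) (lt_max_of_lt_right one_pos)
      have hkey : ∀ p : M × M, p ∈ {p : M × M | f p ≠ 0} ∩ E →
          F p.1 ∈ Metric.closedBall (Sum.inl y₀ : Y ⊕ Z) (S + 1) ∧
          F p.2 ∈ Metric.closedBall (Sum.inl y₀ : Y ⊕ Z) (S + 1) := by
        rintro ⟨a, b⟩ ⟨hf0, hE⟩
        have hd : dist a b ≤ max C 1 := le_trans (hCE _ hE) (le_max_left _ _)
        have hFd : dist (F a) (F b) ≤ S := hS a b hd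
        have hφne : φ a ≠ φ b := by
          intro h
          apply hf0
          simp only [hf, Set.mem_setOf_eq, h, sub_self]
        have hny : (0:ℝ) ≤ dist y₀ y₀ := dist_nonneg
        have hsy : dist y₀ y₀ = 0 := dist_self y₀
        rcases hFa : F a with u | u <;> rcases hFb : F b with v | v
        · exact absurd (by simp [hφ, hFa, hFb]) hφne
        · rw [hFa, hFb, coprod_dist_inl_inr] at hFd
          have hn1 : (0:ℝ) ≤ dist z₀ v := dist_nonneg
          have hn2 : (0:ℝ) ≤ dist u y₀ := dist_nonneg
          constructor
          · rw [Metric.mem_closedBall, coprod_dist_inl_inl]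
            linarith
          · rw [Metric.mem_closedBall, coprod_dist_inr_inl]
            linarith
        · rw [hFa, hFb, coprod_dist_inr_inl] at hFd
          have hn1 : (0:ℝ) ≤ dist z₀ u := dist_nonneg
          have hn2 : (0:ℝ) ≤ dist v y₀ := dist_nonneg
          constructor
          · rw [Metric.mem_closedBall, coprod_dist_inr_inl]
            linarith
          · rw [Metric.mem_closedBall, coprod_dist_inl_inl]
            linarith
        · exact absurd (by simp [hφ, hFa, hFb]) hφne
      constructor
      · have hsub : Prod.fst '' ({p : M × M | f p ≠ 0} ∩ E) ⊆
            F ⁻¹' Metric.closedBall (Sum.inl y₀ : Y ⊕ Z) (S + 1) := by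
          rintro x ⟨p, hp, rfl⟩
          exact (hkey p hp).1
        exact (hF.2 _ Metric.isBounded_closedBall).subset hsub
      · have hsub : Prod.snd '' ({p : M × M | f p ≠ 0} ∩ E) ⊆
            F ⁻¹' Metric.closedBall (Sum.inl y₀ : Y ⊕ Z) (S + 1) := by
          rintro x ⟨p, hp, rfl⟩
          exact (hkey p hp).2
        exact (hF.2 _ Metric.isBounded_closedBall).subset hsub
    have hcyc : ∀ a b c : M, f (b, c) - f (a, c) + f (a, b) = 0 := by
      intro a b c; simp only [hf]; ring
    obtain ⟨g, hgs, hgf⟩ := hH f hcoc hcyc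
    by_cases hne : Nonempty M
    · obtain ⟨x₀⟩ := hne
      have hk : ∀ x, φ x - g x = φ x₀ - g x₀ := by
        intro x
        have := hgf x x₀
        simp only [hf] at this
        omega
      have hside : IsBounded {x : M | ∃ b, F x = Sum.inr b} ∨
          IsBounded {x : M | ∃ a, F x = Sum.inl a} := by
        by_cases hk1 : φ x₀ - g x₀ = 1
        · right
          have hsub : {x : M | ∃ a, F x = Sum.inl a} ⊆ {x : M | g x ≠ 0} := by
            rintro x ⟨a, hFx⟩
            have h0 : φ x = 0 := by simp [hφ, hFx]
            have := hk x
            simp only [Set.mem_setOf_eq]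
            omega
          exact hgs.subset hsub
        · left
          have hsub : {x : M | ∃ b, F x = Sum.inr b} ⊆ {x : M | g x ≠ 0} := by
            rintro x ⟨b, hFx⟩
            have h0 : φ x = 1 := by simp [hφ, hFx]
            have := hk x
            simp only [Set.mem_setOf_eq]
            omega
          exact hgs.subset hsub
      rcases hside with h | h
      · exact Or.inl (factor_left y₀ z₀ F hF h)
      · exact Or.inr (factor_right y₀ z₀ F hF h)
    · have hEmpty : IsEmpty M := not_nonempty_iff.mp hne
      left
      refine ⟨fun x => hEmpty.elim x,
        ⟨fun R hR => ⟨1, one_pos, fun x => hEmpty.elim x⟩, fun B hB => ?_⟩,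
        ⟨1, one_pos, fun x => hEmpty.elim x⟩⟩
      have he : (fun x : M => hEmpty.elim x) ⁻¹' B = ∅ := Set.eq_empty_of_isEmpty _
      rw [he]; exact Bornology.isBounded_empty
end

section
/- Let X be a geodesic metric space, i.e., for any two points x, y ∈ X there is an isometric embedding γ of the interval [0, d(x,y)] into X with γ(0) = x and γ(d(x,y)) = y. Then X fails condition (C) (equivalently, has disconnected Higson corona) if and only if there exists a bounded set X₀ ⊆ X such that for every bounded set C with X₀ ⊆ C ⊆ X, the subspace X \ C is topologically disconnected, i.e., can be partitioned into two nonempty subsets that are open in the subspace topology of X \ C. -/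
open Bornology

/-!
If a coarse map `f : X → Y + Z` witnesses the failure of (C), both `f⁻¹ Y` and `f⁻¹ Z` are
unbounded, and bornologousness keeps them `1`-apart away from a bounded set `X₀`; so they
disconnect the complement of every bounded `C ⊇ X₀`.

Conversely, let `U` be relatively clopen in the complement of a ball `B(p, r)`. In a geodesic
space a geodesic from `x ∈ U` to `y ∉ U` must cross the ball, so `d(x, p) ≤ d(x, y) + r`. Hence
the map `X → X + X` sending `U` to the left and the rest to the right copy is coarse, and it
violates (C) as soon as `U` and its complement are both unbounded. The same estimate makes
arbitrary unions of such sets `U` relatively clopen. To find an unbounded `U` with unbounded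
complement, let `M` be the union of all bounded ones. If `M` is bounded, split the complement
of `B(p, r) ∪ M`: neither side can be bounded. Otherwise bounded pieces reach arbitrarily far
out, and every other block of a disjointed sequence of them gives `U`.
-/

open Metric Set

universe u

section Coarse

variable {X Y W : Type*} [PseudoMetricSpace X] [PseudoMetricSpace Y] [PseudoMetricSpace W]

lemma Bornologous.isBounded_image {f : X → W} (hf : Bornologous f) {s : Set X}
    (hs : IsBounded s) : IsBounded (f '' s) := by
  obtain ⟨C, hC⟩ := isBounded_iff.1 hs
  obtain ⟨S, -, hS⟩ := hf (max C 1) (by positivity)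
  refine isBounded_iff.2 ⟨S, ?_⟩
  rintro _ ⟨x, hx, rfl⟩ _ ⟨y, hy, rfl⟩
  exact hS x y ((hC hx hy).trans (le_max_left _ _))

lemma IsCoarse.of_close {f g : X → W} (hg : IsCoarse g) (hfg : Close f g) : IsCoarse f := by
  obtain ⟨R, hR, hfgR⟩ := hfg
  refine ⟨fun ρ hρ => ?_, fun B hB => ?_⟩
  · obtain ⟨S, hS, hgS⟩ := hg.1 ρ hρ
    refine ⟨R + S + R, by positivity, fun x x' hxx' => ?_⟩
    calc dist (f x) (f x') ≤ dist (f x) (g x) + dist (g x) (g x') + dist (g x') (f x') :=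
          dist_triangle4 _ _ _ _
      _ ≤ R + S + R := by
          gcongr
          exacts [hfgR x, hgS x x' hxx', dist_comm (f x') (g x') ▸ hfgR x']
  · exact (hg.2 _ hB.cthickening).subset fun x hx =>
      mem_cthickening_of_dist_le (g x) (f x) R B hx (dist_comm (f x) (g x) ▸ hfgR x)

lemma IsCoarse.of_isometry_comp {i : Y → W} (hi : Isometry i) {g : X → Y}
    (hg : IsCoarse (i ∘ g)) : IsCoarse g := by
  refine ⟨fun R hR => ?_, fun D hD => ?_⟩
  · obtain ⟨S, hS, hgS⟩ := hg.1 R hR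
    exact ⟨S, hS, fun x x' hxx' => hi.dist_eq (g x) (g x') ▸ hgS x x' hxx'⟩
  · exact (hg.2 _ (hi.lipschitz.isBounded_image hD)).subset fun x hx => ⟨g x, hx, rfl⟩

theorem exists_isCoarse_close_comp_iff {i : Y → W} (hi : Isometry i) (y₀ : Y)
    (hy₀ : ∀ y, ∀ w ∉ range i, dist (i y₀) w ≤ dist (i y) w) {f : X → W} (hf : IsCoarse f) :
    (∃ g : X → Y, IsCoarse g ∧ Close (i ∘ g) f) ↔ IsBounded (f ⁻¹' (range i)ᶜ) := by
  constructor
  · rintro ⟨g, -, R, -, hR⟩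
    exact (hf.2 _ isBounded_closedBall).subset fun x hx =>
      mem_closedBall'.2 ((hy₀ (g x) (f x) hx).trans (hR x))
  · intro hB
    classical
    obtain ⟨R, hR, hBR⟩ := (hf.1.isBounded_image hB).subset_closedBall_lt 0 (i y₀)
    let g (x : X) : Y := if h : f x ∈ range i then h.choose else y₀
    have hclose : Close (i ∘ g) f := by
      refine ⟨R, hR, fun x => ?_⟩
      by_cases hx : f x ∈ range i
      · rw [Function.comp_apply, show g x = hx.choose from dif_pos hx, hx.choose_spec,
          dist_self]
        exact hR.le
      · rw [Function.comp_apply, show g x = y₀ from dif_neg hx, dist_comm]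
        exact hBR ⟨x, hx, rfl⟩
    exact ⟨g, (hf.of_close hclose).of_isometry_comp hi, hclose⟩

end Coarse

section Coproduct

variable {Y Z : Type*} [MetricSpace Y] [MetricSpace Z] (y₀ : Y) (z₀ : Z)

lemma isometry_inl_coprod : letI := coprodMetric y₀ z₀; Isometry (Sum.inl : Y → Y ⊕ Z) :=
  letI := coprodMetric y₀ z₀; Isometry.of_dist_eq fun _ _ => rfl

lemma isometry_inr_coprod : letI := coprodMetric y₀ z₀; Isometry (Sum.inr : Z → Y ⊕ Z) :=
  letI := coprodMetric y₀ z₀; Isometry.of_dist_eq fun _ _ => rfl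

lemma coprod_dist_inl_base_le (a : Y) :
    letI := coprodMetric y₀ z₀
    ∀ w ∉ range Sum.inl, dist (Sum.inl y₀ : Y ⊕ Z) w ≤ dist (Sum.inl a) w := by
  rintro (b | b) hw
  · exact absurd ⟨b, rfl⟩ hw
  · show dist y₀ y₀ + 1 + dist z₀ b ≤ dist a y₀ + 1 + dist z₀ b
    simp

lemma coprod_dist_inr_base_le (c : Z) :
    letI := coprodMetric y₀ z₀
    ∀ w ∉ range Sum.inr, dist (Sum.inr z₀ : Y ⊕ Z) w ≤ dist (Sum.inr c) w := by
  rintro (b | b) hw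
  · show dist b y₀ + 1 + dist z₀ z₀ ≤ dist b y₀ + 1 + dist z₀ c
    simp
  · exact absurd ⟨b, rfl⟩ hw

lemma coprod_dist_base_inl_le (a : Y) :
    letI := coprodMetric y₀ z₀
    ∀ w : Y ⊕ Z, w ∉ range Sum.inl →
      dist (Sum.inl y₀ : Y ⊕ Z) (Sum.inl a) ≤ dist (Sum.inl a) w := by
  rintro (b | b) hw
  · exact absurd ⟨b, rfl⟩ hw
  · show dist y₀ a ≤ dist a y₀ + 1 + dist z₀ b
    linarith [dist_comm y₀ a, dist_nonneg (x := z₀) (y := b)]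

end Coproduct

theorem condC_iff {X : Type u} [MetricSpace X] :
    CondC X ↔ ∀ (Y Z : Type u) [MetricSpace Y] [MetricSpace Z] (y₀ : Y) (z₀ : Z)
      (f : X → Y ⊕ Z), letI := coprodMetric y₀ z₀
      IsCoarse f → IsBounded (f ⁻¹' range Sum.inr) ∨ IsBounded (f ⁻¹' range Sum.inl) := by
  refine forall_congr' fun Y => forall_congr' fun Z => forall_congr' fun _ => forall_congr' fun _ =>
    forall_congr' fun y₀ => forall_congr' fun z₀ => forall_congr' fun f => ?_
  let _ := coprodMetric y₀ z₀
  refine imp_congr_right fun hf => ?_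
  rw [exists_isCoarse_close_comp_iff (isometry_inl_coprod y₀ z₀) y₀
      (coprod_dist_inl_base_le y₀ z₀) hf,
    exists_isCoarse_close_comp_iff (isometry_inr_coprod y₀ z₀) z₀
      (coprod_dist_inr_base_le y₀ z₀) hf, compl_range_inl, compl_range_inr]

lemma isClopen_of_le_dist {S : Type*} [PseudoMetricSpace S] {U : Set S} {ε : ℝ} (hε : 0 < ε)
    (h : ∀ a ∈ U, ∀ b ∉ U, ε ≤ dist a b) : IsClopen U := by
  refine ⟨isOpen_compl_iff.1 (isOpen_iff.2 fun b hb => ⟨ε, hε, fun a ha haU => ?_⟩),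
    isOpen_iff.2 fun a ha => ⟨ε, hε, fun b hb => by_contra fun hbU => ?_⟩⟩
  · exact (h a haU b hb).not_gt (mem_ball.1 ha)
  · exact (h a ha b hbU).not_gt (mem_ball'.1 hb)

theorem exists_isBounded_forall_partition_of_isCoarse {X Y Z : Type*} [MetricSpace X]
    [MetricSpace Y] [MetricSpace Z] (y₀ : Y) (z₀ : Z) (f : X → Y ⊕ Z) :
    letI := coprodMetric y₀ z₀
    IsCoarse f → ¬ IsBounded (f ⁻¹' range Sum.inl) → ¬ IsBounded (f ⁻¹' range Sum.inr) →
    ∃ X₀ : Set X, IsBounded X₀ ∧ ∀ C : Set X, IsBounded C → X₀ ⊆ C →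
      ∃ U V : Set {x : X // x ∉ C}, IsOpen U ∧ IsOpen V ∧ U.Nonempty ∧ V.Nonempty ∧
        U ∩ V = ∅ ∧ U ∪ V = univ := by
  let _ := coprodMetric y₀ z₀
  intro hf hl hr
  rw [← compl_range_inl] at hr
  obtain ⟨S, -, hS⟩ := hf.1 1 one_pos
  refine ⟨f ⁻¹' closedBall (Sum.inl y₀) S, hf.2 _ isBounded_closedBall, fun C hC hC₀ => ?_⟩
  have hout : ∀ s, ¬ IsBounded (f ⁻¹' s) → ∃ x : {x // x ∉ C}, f x ∈ s := fun s hs =>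
    let ⟨x, hxs, hxC⟩ := not_subset.1 fun h => hs (hC.subset h)
    ⟨⟨x, hxC⟩, hxs⟩
  let U : Set {x : X // x ∉ C} := {x | f x ∈ range Sum.inl}
  have hU : IsClopen U := isClopen_of_le_dist one_pos fun a ⟨ya, hya⟩ b hb => by
    by_contra! hab
    have hnear : dist (f a) (f b) ≤ S := hS a b hab.le
    have hfar : S < dist (f a) (Sum.inl y₀) :=
      not_le.1 fun h => a.2 (hC₀ (mem_closedBall.2 h))
    have hsep := coprod_dist_base_inl_le y₀ z₀ ya (f b) hb
    rw [hya, dist_comm] at hsep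
    linarith
  exact ⟨U, Uᶜ, hU.isOpen, hU.isClosed.isOpen_compl, hout _ hl, hout _ hr,
    inter_compl_self U, union_compl_self U⟩

def IsGeodesicSpace (X : Type*) [PseudoMetricSpace X] : Prop :=
  ∀ x y : X, ∃ γ : ℝ → X, γ 0 = x ∧ γ (dist x y) = y ∧
    ∀ s ∈ Icc (0 : ℝ) (dist x y), ∀ t ∈ Icc (0 : ℝ) (dist x y), dist (γ s) (γ t) = |s - t|

/-- For open `S`, this says that `U` is a clopen subset of the subspace `S`. -/
def IsRelClopen {X : Type*} [TopologicalSpace X] (S U : Set X) : Prop :=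
  U ⊆ S ∧ IsOpen U ∧ IsOpen (S \ U)

namespace IsRelClopen

variable {X : Type*} [TopologicalSpace X] {S T U V : Set X}

lemma compl (hU : IsRelClopen S U) : IsRelClopen S (S \ U) :=
  ⟨sdiff_subset, hU.2.2, by rw [sdiff_sdiff_cancel_left hU.1]; exact hU.2.1⟩

lemma diff (hU : IsRelClopen S U) (hV : IsRelClopen S V) : IsRelClopen S (U \ V) := by
  refine ⟨sdiff_subset.trans hU.1, ?_, ?_⟩
  · rw [← inter_eq_left.2 hU.1, inter_sdiff_assoc]
    exact hU.2.1.inter hV.2.2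
  · rw [sdiff_sdiff_right, inter_eq_right.2 hV.1]
    exact hU.2.2.union hV.2.1

lemma trans (hT : IsRelClopen S T) (hU : IsRelClopen T U) : IsRelClopen S U := by
  refine ⟨hU.1.trans hT.1, hU.2.1, ?_⟩
  rw [← sdiff_union_sdiff_cancel hT.1 hU.1]
  exact hT.2.2.union hU.2.2

end IsRelClopen

lemma exists_isRelClopen_of_partition {X : Type*} [TopologicalSpace X] {C : Set X}
    (hC : IsClosed C)
    (h : ∃ U V : Set {x : X // x ∉ C}, IsOpen U ∧ IsOpen V ∧ U.Nonempty ∧ V.Nonempty ∧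
      U ∩ V = ∅ ∧ U ∪ V = univ) :
    ∃ U, IsRelClopen Cᶜ U ∧ U.Nonempty ∧ (Cᶜ \ U).Nonempty := by
  obtain ⟨U, V, hUo, hVo, hUne, hVne, hUV, hUVu⟩ := h
  have hV : Uᶜ = V :=
    IsCompl.compl_eq ⟨disjoint_iff_inter_eq_empty.2 hUV, codisjoint_iff.2 hUVu⟩
  have himg : Cᶜ \ Subtype.val '' U = Subtype.val '' V := by
    rw [← hV, image_compl_eq_range_sdiff_image Subtype.val_injective, Subtype.range_coe_subtype]
    rfl
  have hopen := hC.isOpen_compl.isOpenMap_subtype_val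
  exact ⟨Subtype.val '' U, ⟨image_subset_iff.2 fun x _ => x.2, hopen U hUo, himg ▸ hopen V hVo⟩,
    hUne.image _, himg ▸ hVne.image _⟩

lemma not_isBounded_of_forall_exists_le_dist {X : Type*} [PseudoMetricSpace X] {s : Set X}
    (p : X) (h : ∀ n : ℕ, ∃ x ∈ s, (n : ℝ) ≤ dist x p) : ¬ IsBounded s := by
  intro hs
  obtain ⟨R, hR⟩ := hs.subset_closedBall p
  obtain ⟨n, hn⟩ := exists_nat_gt R
  obtain ⟨x, hx, hxn⟩ := h n
  exact (mem_closedBall.1 (hR hx)).not_gt (hn.trans_le hxn)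

namespace IsGeodesicSpace

variable {X : Type*} [PseudoMetricSpace X] {p : X} {r : ℝ}

/-- A geodesic from a point of `U` to a point outside `U` has to pass through `K`. -/
theorem exists_mem_dist_le (hX : IsGeodesicSpace X) {K U : Set X} (hU : IsRelClopen Kᶜ U)
    {x y : X} (hx : x ∈ U) (hy : y ∉ U) : ∃ c ∈ K, dist x c ≤ dist x y := by
  obtain ⟨γ, hγx, hγy, hγ⟩ := hX x y
  have h0 : (0 : ℝ) ∈ Icc 0 (dist x y) := left_mem_Icc.2 dist_nonneg
  have hdist : ∀ s ∈ Icc 0 (dist x y), dist x (γ s) = s := fun s hs => by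
    rw [← hγx, hγ 0 h0 s hs, zero_sub, abs_neg, abs_of_nonneg hs.1]
  have hconn : IsPreconnected (γ '' Icc 0 (dist x y)) :=
    isPreconnected_Icc.image γ (LipschitzOnWith.of_dist_le_mul fun s hs t ht => by
      rw [hγ s hs t ht, NNReal.coe_one, one_mul, Real.dist_eq]).continuousOn
  by_contra! hfar
  have hK : γ '' Icc 0 (dist x y) ⊆ Kᶜ := by
    rintro _ ⟨s, hs, rfl⟩ hsK
    exact (hfar _ hsK).not_ge ((hdist s hs).trans_le hs.2)
  have hγU := hconn.subset_left_of_subset_union hU.2.1 hU.2.2 disjoint_sdiff_right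
    (hK.trans (union_sdiff_cancel hU.1).superset) ⟨x, ⟨0, h0, hγx⟩, hx⟩
  exact hy (hγU ⟨dist x y, right_mem_Icc.2 dist_nonneg, hγy⟩)

theorem dist_le_of_isRelClopen (hX : IsGeodesicSpace X) {U : Set X}
    (hU : IsRelClopen (closedBall p r)ᶜ U) {x y : X} (hx : x ∈ U) (hy : y ∉ U) :
    dist x p ≤ dist x y + r := by
  obtain ⟨c, hc, hxc⟩ := hX.exists_mem_dist_le hU hx hy
  linarith [dist_triangle x c p, mem_closedBall.1 hc]

/-- A point `q` outside every `U i` keeps the distance `dist q p - r` from all of them. -/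
theorem isRelClopen_iUnion (hX : IsGeodesicSpace X) {ι : Sort*} {U : ι → Set X}
    (hU : ∀ i, IsRelClopen (closedBall p r)ᶜ (U i)) :
    IsRelClopen (closedBall p r)ᶜ (⋃ i, U i) := by
  refine ⟨iUnion_subset fun i => (hU i).1, isOpen_iUnion fun i => (hU i).2.1,
    isOpen_iff.2 fun q hq => ⟨dist q p - r, ?_, fun y hy => ⟨?_, ?_⟩⟩⟩
  · linarith [not_le.1 (mem_closedBall.not.1 hq.1)]
  · rw [mem_ball] at hy
    exact fun hyr => by linarith [dist_triangle q y p, mem_closedBall.1 hyr, dist_comm q y]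
  · rw [mem_ball, dist_comm] at hy
    simp only [mem_iUnion, not_exists]
    intro i hyi
    have := hX.dist_le_of_isRelClopen (hU i).compl
      ⟨hq.1, fun hqi => hq.2 (mem_iUnion.2 ⟨i, hqi⟩)⟩ (fun h => h.2 hyi)
    linarith

theorem exists_unbounded_split_of_seq (hX : IsGeodesicSpace X) {W : ℕ → Set X}
    (hW : ∀ n, IsRelClopen (closedBall p r)ᶜ (W n)) {w : ℕ → X}
    (hw : ∀ n, w n ∈ disjointed W n) (hwp : ∀ n : ℕ, (n : ℝ) ≤ dist (w n) p) :
    ∃ U, IsRelClopen (closedBall p r)ᶜ U ∧ ¬ IsBounded U ∧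
      ¬ IsBounded ((closedBall p r)ᶜ \ U) := by
  have hD : ∀ n, IsRelClopen (closedBall p r)ᶜ (disjointed W n) := fun n =>
    disjointedRec (fun _ i ht => ht.diff (hW i)) (hW n)
  refine ⟨⋃ n, disjointed W (2 * n), hX.isRelClopen_iUnion fun n => hD _,
    not_isBounded_of_forall_exists_le_dist p fun n => ⟨w (2 * n), mem_iUnion.2 ⟨n, hw _⟩, ?_⟩,
    not_isBounded_of_forall_exists_le_dist p fun n =>
      ⟨w (2 * n + 1), ⟨(hD _).1 (hw _), ?_⟩, ?_⟩⟩
  · exact le_trans (by norm_cast; omega) (hwp _)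
  · simp only [mem_iUnion, not_exists]
    exact fun m hm => disjoint_left.1 (disjoint_disjointed W (by omega)) hm (hw _)
  · exact le_trans (by norm_cast; omega) (hwp _)

theorem exists_unbounded_split_of_isBounded (hX : IsGeodesicSpace X)
    (hsplit : ∀ C, IsBounded C → IsClosed C → closedBall p r ⊆ C →
      ∃ U, IsRelClopen Cᶜ U ∧ U.Nonempty ∧ (Cᶜ \ U).Nonempty)
    (hM : IsBounded (⋃₀ {V | IsRelClopen (closedBall p r)ᶜ V ∧ IsBounded V})) :
    ∃ U, IsRelClopen (closedBall p r)ᶜ U ∧ ¬ IsBounded U ∧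
      ¬ IsBounded ((closedBall p r)ᶜ \ U) := by
  set K := closedBall p r
  set M := ⋃₀ {V | IsRelClopen Kᶜ V ∧ IsBounded V}
  have hMc : IsRelClopen Kᶜ M := by
    simp only [M, sUnion_eq_iUnion]
    exact hX.isRelClopen_iUnion fun V => V.2.1
  have hunb : ∀ V, IsRelClopen (Kᶜ \ M) V → V.Nonempty → ¬ IsBounded V := by
    rintro V hV ⟨v, hv⟩ hVb
    exact (hV.1 hv).2 ((show V ⊆ M from subset_sUnion_of_mem ⟨hMc.compl.trans hV, hVb⟩) hv)
  have hKM : (K ∪ M)ᶜ = Kᶜ \ M := compl_union K M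
  obtain ⟨U, hU, hUne, hUcne⟩ := hsplit (K ∪ M) (isBounded_closedBall.union hM)
    (isOpen_compl_iff.1 (hKM ▸ hMc.compl.2.1)) subset_union_left
  rw [hKM] at hU hUcne
  exact ⟨U, hMc.compl.trans hU, hunb U hU hUne,
    fun hb => hunb _ hU.compl hUcne (hb.subset (sdiff_subset_sdiff_left sdiff_subset))⟩

theorem exists_unbounded_split_of_not_isBounded (hX : IsGeodesicSpace X)
    (hM : ¬ IsBounded (⋃₀ {V | IsRelClopen (closedBall p r)ᶜ V ∧ IsBounded V})) :
    ∃ U, IsRelClopen (closedBall p r)ᶜ U ∧ ¬ IsBounded U ∧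
      ¬ IsBounded ((closedBall p r)ᶜ \ U) := by
  have hfar : ∀ ρ : ℝ, ∃ V ρ', IsRelClopen (closedBall p r)ᶜ V ∧ ρ + 1 ≤ ρ' ∧
      V ⊆ closedBall p ρ' ∧ ∃ v ∈ V, ρ < dist v p := by
    intro ρ
    obtain ⟨v, ⟨V, ⟨hV, hVb⟩, hvV⟩, hvρ⟩ :=
      not_subset.1 fun h => hM (isBounded_closedBall (x := p) (r := ρ) |>.subset h)
    obtain ⟨ρ', hρ'⟩ := hVb.subset_closedBall p
    exact ⟨V, max ρ' (ρ + 1), hV, le_max_right _ _,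
      hρ'.trans (closedBall_subset_closedBall (le_max_left _ _)), v, hvV,
      not_le.1 (mem_closedBall.not.1 hvρ)⟩
  choose V β hV hβ hVβ v hv hvβ using hfar
  let ρ (n : ℕ) : ℝ := β^[n] 0
  have hρ_succ (n : ℕ) : ρ (n + 1) = β (ρ n) := Function.iterate_succ_apply' β n 0
  have hρ_mono : Monotone ρ := monotone_nat_of_le_succ fun n => by
    linarith [hρ_succ n, hβ (ρ n)]
  have hρ_ge (n : ℕ) : (n : ℝ) ≤ ρ n := by
    induction n with
    | zero => simp [ρ]
    | succ n ih => push_cast; linarith [hρ_succ n, hβ (ρ n)]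
  refine hX.exists_unbounded_split_of_seq (fun n => hV (ρ n)) (w := fun n => v (ρ n)) ?_
    fun n => (hρ_ge n).trans (hvβ _).le
  intro n
  rw [disjointed_eq_inter_compl]
  refine ⟨hv _, mem_iInter₂.2 fun j hj hvj => ?_⟩
  have := mem_closedBall.1 (hVβ _ hvj)
  linarith [hvβ (ρ n), hρ_succ j, hρ_mono (Nat.succ_le_of_lt hj)]

theorem exists_unbounded_split (hX : IsGeodesicSpace X)
    (hsplit : ∀ C, IsBounded C → IsClosed C → closedBall p r ⊆ C →
      ∃ U, IsRelClopen Cᶜ U ∧ U.Nonempty ∧ (Cᶜ \ U).Nonempty) :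
    ∃ U, IsRelClopen (closedBall p r)ᶜ U ∧ ¬ IsBounded U ∧
      ¬ IsBounded ((closedBall p r)ᶜ \ U) := by
  by_cases hM : IsBounded (⋃₀ {V | IsRelClopen (closedBall p r)ᶜ V ∧ IsBounded V})
  · exact hX.exists_unbounded_split_of_isBounded hsplit hM
  · exact hX.exists_unbounded_split_of_not_isBounded hM

theorem not_condC_of_unbounded_split {X : Type u} [MetricSpace X] (hX : IsGeodesicSpace X)
    {p : X} {r : ℝ} (hr : 0 ≤ r) {U : Set X} (hU : IsRelClopen (closedBall p r)ᶜ U)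
    (hUb : ¬ IsBounded U) (hUcb : ¬ IsBounded ((closedBall p r)ᶜ \ U)) : ¬ CondC X := by
  classical
  let _ := coprodMetric p p
  let f (x : X) : X ⊕ X := if x ∈ U then .inl x else .inr x
  have hdist (x y : X) : dist (f x) (f y) ≤ 3 * dist x y + 2 * r + 1 := by
    have hmixed (x y : X) (hx : x ∈ U) (hy : y ∉ U) :
        dist x p + 1 + dist p y ≤ 3 * dist x y + 2 * r + 1 := by
      linarith [hX.dist_le_of_isRelClopen hU hx hy, dist_triangle p x y, dist_comm p x]
    by_cases hx : x ∈ U <;> by_cases hy : y ∈ U <;> simp only [f, hx, hy, if_true, if_false]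
    · show dist x y ≤ _
      linarith [dist_nonneg (x := x) (y := y)]
    · exact hmixed x y hx hy
    · show dist y p + 1 + dist p x ≤ _
      rw [dist_comm x y]
      exact hmixed y x hy hx
    · show dist x y ≤ _
      linarith [dist_nonneg (x := x) (y := y)]
  have hf : IsCoarse f := by
    refine ⟨fun R hR => ⟨3 * R + 2 * r + 1, by positivity,
      fun x y hxy => (hdist x y).trans (by linarith)⟩, fun B hB => ?_⟩
    obtain ⟨R, hR⟩ := hB.subset_closedBall (Sum.inl p)
    refine (isBounded_closedBall (x := p) (r := R)).subset fun x hx => ?_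
    refine mem_closedBall.2 (le_trans ?_ (mem_closedBall.1 (hR hx)))
    by_cases hxU : x ∈ U <;> simp only [f, hxU, if_true, if_false]
    · exact le_rfl
    · show dist x p ≤ dist p p + 1 + dist p x
      linarith [dist_self p, dist_comm p x]
  have hinl : f ⁻¹' range Sum.inl = U := by
    ext x
    by_cases hx : x ∈ U <;> simp [f, hx]
  rw [condC_iff]
  intro hC
  rcases hC X X p p f hf with h | h
  · rw [← compl_range_inl, preimage_compl, hinl] at h
    exact hUcb (h.subset fun x hx => hx.2)
  · exact hUb (hinl ▸ h)

end IsGeodesicSpace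

/-- a geodesic metric space fails condition (C) (equivalently, has disconnected
Higson corona) iff there is a bounded set `X₀` such that the complement of every bounded set
containing `X₀` is topologically disconnected. -/
theorem geodesic_not_condC_iff_disconnected_at_infinity {X : Type u} [MetricSpace X]
    (hgeo : ∀ x y : X, ∃ γ : ℝ → X, γ 0 = x ∧ γ (dist x y) = y ∧
      ∀ s ∈ Set.Icc (0 : ℝ) (dist x y), ∀ t ∈ Set.Icc (0 : ℝ) (dist x y),
        dist (γ s) (γ t) = |s - t|) :
    ¬ CondC X ↔
      ∃ X₀ : Set X, IsBounded X₀ ∧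
        ∀ C : Set X, IsBounded C → X₀ ⊆ C →
          ∃ U V : Set {x : X // x ∉ C},
            IsOpen U ∧ IsOpen V ∧ U.Nonempty ∧ V.Nonempty ∧
            U ∩ V = ∅ ∧ U ∪ V = Set.univ := by
  have hX : IsGeodesicSpace X := hgeo
  constructor
  · intro h
    simp only [condC_iff, not_forall, not_or] at h
    obtain ⟨Y, Z, _, _, y₀, z₀, f, hf, hr, hl⟩ := h
    exact exists_isBounded_forall_partition_of_isCoarse y₀ z₀ f hf hl hr
  · rintro ⟨X₀, hX₀, hsplit⟩
    obtain ⟨-, -, -, -, ⟨p, -⟩, -⟩ := hsplit X₀ hX₀ subset_rfl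
    obtain ⟨r, hr, hX₀r⟩ := hX₀.subset_closedBall_lt 0 p.1
    obtain ⟨U, hU, hUb, hUcb⟩ := hX.exists_unbounded_split fun C hC hCc hrC =>
      exists_isRelClopen_of_partition hCc (hsplit C hC (hX₀r.trans hrC))
    exact hX.not_condC_of_unbounded_split hr.le hU hUb hUcb
end

section
/- Let (X, 𝒳) and (Y, 𝒴) be connected coarse spaces with chosen base points x₀ ∈ X and y₀ ∈ Y, and let 𝒳 + 𝒴 be the coarse structure on the disjoint union X + Y generated by 𝒳 ∪ 𝒴 ∪ {{(x₀, y₀)}}. Then every relation in 𝒳 + 𝒴 is contained in a relation of the form (R_r ∘ U ∘ S_r) ∪ (S_r ∘ U ∘ R_r), where R ∈ 𝒳, S ∈ 𝒴, U = {(x₀,y₀), (y₀,x₀)} ∪ Δ, Δ is the diagonal of X + Y, and for a relation T on X (respectively on Y), T_r denotes T ∪ Δ. -/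
open Bornology

/-- The composition of two relations: `R ∘ S = {(a,c) | ∃ b, (a,b) ∈ R ∧ (b,c) ∈ S}`. -/
def RelComp {A : Type u} (R S : Set (A × A)) : Set (A × A) :=
  {p : A × A | ∃ b : A, (p.1, b) ∈ R ∧ (b, p.2) ∈ S}

/-- The inverse of a relation. -/
def RelInv {A : Type u} (R : Set (A × A)) : Set (A × A) :=
  {p : A × A | (p.2, p.1) ∈ R}

/-- The diagonal relation. -/
def diagRel (A : Type u) : Set (A × A) :=
  {p : A × A | p.1 = p.2}

/-- A *coarse structure* on `A`: a family of relations containing the diagonal and closed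
under subrelations, inverses, compositions and finite unions. -/
structure IsCoarseStructure {A : Type u} (C : Set (Set (A × A))) : Prop where
  diag_mem : diagRel A ∈ C
  subset_mem : ∀ R ∈ C, ∀ S : Set (A × A), S ⊆ R → S ∈ C
  inv_mem : ∀ R ∈ C, RelInv R ∈ C
  comp_mem : ∀ R ∈ C, ∀ S ∈ C, RelComp R S ∈ C
  union_mem : ∀ R ∈ C, ∀ S ∈ C, R ∪ S ∈ C

/-- Membership in the smallest coarse structure containing `C₀`: a relation belongs to the
generated coarse structure iff it belongs to every coarse structure containing `C₀`. -/
def genCS {A : Type u} (C₀ : Set (Set (A × A))) : Set (Set (A × A)) :=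
  {R : Set (A × A) | ∀ C : Set (Set (A × A)), IsCoarseStructure C → C₀ ⊆ C → R ∈ C}

/-- The image `(f × f)(R)` of a relation under a map. -/
def mapRel {A : Type u} {B : Type v} (f : A → B) (R : Set (A × A)) : Set (B × B) :=
  Prod.map f f '' R

/-- A map between coarse spaces is *bornologous* if images of relations of the coarse
structure on the domain belong to the coarse structure on the codomain. -/
def BornologousCS {A : Type u} {B : Type v} (CA : Set (Set (A × A)))
    (CB : Set (Set (B × B))) (f : A → B) : Prop :=
  ∀ R ∈ CA, mapRel f R ∈ CB

/-- A coarse structure is *connected* if it contains every finite relation. -/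
def IsConnectedCS {A : Type u} (C : Set (Set (A × A))) : Prop :=
  ∀ R : Set (A × A), R.Finite → R ∈ C

/-- The relation `U = {(x₀, y₀), (y₀, x₀)} ∪ Δ` on the disjoint union. -/
def crossRel {X : Type u} {Y : Type v} (x₀ : X) (y₀ : Y) : Set ((X ⊕ Y) × (X ⊕ Y)) :=
  ({((Sum.inl x₀ : X ⊕ Y), (Sum.inr y₀ : X ⊕ Y)),
    ((Sum.inr y₀ : X ⊕ Y), (Sum.inl x₀ : X ⊕ Y))} : Set ((X ⊕ Y) × (X ⊕ Y))) ∪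
    diagRel (X ⊕ Y)

section AuxG
variable {X : Type u} {Y : Type v}

def Gset (x₀ : X) (y₀ : Y) (R : Set (X × X)) (S : Set (Y × Y)) :
    Set ((X ⊕ Y) × (X ⊕ Y)) :=
  {p | match p with
    | (Sum.inl x, Sum.inl x') => (x, x') ∈ R ∨ x = x'
    | (Sum.inr y, Sum.inr y') => (y, y') ∈ S ∨ y = y'
    | (Sum.inl x, Sum.inr y) => ((x, x₀) ∈ R ∨ x = x₀) ∧ ((y₀, y) ∈ S ∨ y₀ = y)
    | (Sum.inr y, Sum.inl x) => ((y, y₀) ∈ S ∨ y = y₀) ∧ ((x₀, x) ∈ R ∨ x₀ = x)}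

variable {x₀ : X} {y₀ : Y} {R R₁ R₂ : Set (X × X)} {S S₁ S₂ : Set (Y × Y)}

lemma aux_comp {A : Type*} {R₁ R₂ : Set (A × A)} {u w v : A}
    (h1 : (u, w) ∈ R₁ ∨ u = w) (h2 : (w, v) ∈ R₂ ∨ w = v) :
    (u, v) ∈ RelComp (R₁ ∪ diagRel A) (R₂ ∪ diagRel A) :=
  ⟨w, h1.imp id id, h2.imp id id⟩

lemma Gset_mono (hR : R₁ ⊆ R₂) (hS : S₁ ⊆ S₂) : Gset x₀ y₀ R₁ S₁ ⊆ Gset x₀ y₀ R₂ S₂ := by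
  rintro ⟨a | a, b | b⟩ h <;> simp only [Gset, Set.mem_setOf_eq] at h ⊢ <;> tauto

lemma diag_subset_Gset : diagRel (X ⊕ Y) ⊆ Gset x₀ y₀ R S := by
  rintro ⟨a, b⟩ h
  have h' : a = b := h
  subst h'
  cases a <;> exact Or.inr rfl

lemma inv_Gset : RelInv (Gset x₀ y₀ R S) ⊆ Gset x₀ y₀ (RelInv R) (RelInv S) := by
  rintro ⟨a | a, b | b⟩ h <;>
    simp only [Gset, RelInv, Set.mem_setOf_eq] at h ⊢
  · exact h.imp id Eq.symm
  · exact ⟨h.2.imp id Eq.symm, h.1.imp id Eq.symm⟩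
  · exact ⟨h.2.imp id Eq.symm, h.1.imp id Eq.symm⟩
  · exact h.imp id Eq.symm

lemma comp_Gset :
    RelComp (Gset x₀ y₀ R₁ S₁) (Gset x₀ y₀ R₂ S₂) ⊆
      Gset x₀ y₀ (RelComp (R₁ ∪ diagRel X) (R₂ ∪ diagRel X))
        (RelComp (S₁ ∪ diagRel Y) (S₂ ∪ diagRel Y)) := by
  rintro ⟨a, c⟩ ⟨b, h1, h2⟩
  rcases a with x | y <;> rcases b with z | w <;> rcases c with x' | y' <;>
    simp only [Gset, Set.mem_setOf_eq] at h1 h2 ⊢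
  · exact Or.inl (aux_comp h1 h2)
  · exact ⟨Or.inl (aux_comp h1 h2.1),
      h2.2.imp (fun h => aux_comp (Or.inr rfl) (Or.inl h)) id⟩
  · exact Or.inl (aux_comp h1.1 h2.2)
  · exact ⟨h1.1.imp (fun h => aux_comp (Or.inl h) (Or.inr rfl)) id,
      Or.inl (aux_comp h1.2 h2)⟩
  · exact ⟨h1.1.imp (fun h => aux_comp (Or.inl h) (Or.inr rfl)) id,
      Or.inl (aux_comp h1.2 h2)⟩
  · exact Or.inl (aux_comp h1.1 h2.2)
  · exact ⟨Or.inl (aux_comp h1 h2.1),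
      h2.2.imp (fun h => aux_comp (Or.inr rfl) (Or.inl h)) id⟩
  · exact Or.inl (aux_comp h1 h2)

lemma Gset_subset_F :
    Gset x₀ y₀ R S ⊆
      RelComp (RelComp (mapRel Sum.inl R ∪ diagRel (X ⊕ Y)) (crossRel x₀ y₀))
          (mapRel Sum.inr S ∪ diagRel (X ⊕ Y)) ∪
        RelComp (RelComp (mapRel Sum.inr S ∪ diagRel (X ⊕ Y)) (crossRel x₀ y₀))
          (mapRel Sum.inl R ∪ diagRel (X ⊕ Y)) := by
  rintro ⟨a | a, b | b⟩ h <;> simp only [Gset, Set.mem_setOf_eq] at h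
  · refine Or.inl ⟨Sum.inl b, ⟨Sum.inl b, ?_, Or.inr rfl⟩, Or.inr rfl⟩
    exact h.elim (fun h' => Or.inl ⟨(a, b), h', rfl⟩) (fun h' => Or.inr (congrArg Sum.inl h'))
  · refine Or.inl ⟨Sum.inr y₀, ⟨Sum.inl x₀, ?_, Or.inl (Or.inl rfl)⟩, ?_⟩
    · exact h.1.elim (fun h' => Or.inl ⟨(a, x₀), h', rfl⟩) (fun h' => Or.inr (congrArg Sum.inl h'))
    · exact h.2.elim (fun h' => Or.inl ⟨(y₀, b), h', rfl⟩) (fun h' => Or.inr (congrArg Sum.inr h'))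
  · refine Or.inr ⟨Sum.inl x₀, ⟨Sum.inr y₀, ?_, Or.inl (Or.inr rfl)⟩, ?_⟩
    · exact h.1.elim (fun h' => Or.inl ⟨(a, y₀), h', rfl⟩) (fun h' => Or.inr (congrArg Sum.inr h'))
    · exact h.2.elim (fun h' => Or.inl ⟨(x₀, b), h', rfl⟩) (fun h' => Or.inr (congrArg Sum.inl h'))
  · refine Or.inl ⟨Sum.inr a, ⟨Sum.inr a, Or.inr rfl, Or.inr rfl⟩, ?_⟩
    exact h.elim (fun h' => Or.inl ⟨(a, b), h', rfl⟩) (fun h' => Or.inr (congrArg Sum.inr h'))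

end AuxG

/-- every relation in the coarse structure `𝒳 + 𝒴` of the coarse coproduct of
two connected coarse spaces is contained in a relation of the form
`(R_r ∘ U ∘ S_r) ∪ (S_r ∘ U ∘ R_r)` with `R ∈ 𝒳` and `S ∈ 𝒴`. -/
theorem coprodCS_relations_bounded {X : Type u} {Y : Type v}
    (𝒳 : Set (Set (X × X))) (𝒴 : Set (Set (Y × Y)))
    (hX : IsCoarseStructure 𝒳) (hXc : IsConnectedCS 𝒳)
    (hY : IsCoarseStructure 𝒴) (hYc : IsConnectedCS 𝒴)
    (x₀ : X) (y₀ : Y) :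
    ∀ Q ∈ genCS (mapRel (Sum.inl : X → X ⊕ Y) '' 𝒳 ∪ mapRel (Sum.inr : Y → X ⊕ Y) '' 𝒴 ∪
        {({((Sum.inl x₀ : X ⊕ Y), (Sum.inr y₀ : X ⊕ Y))} : Set ((X ⊕ Y) × (X ⊕ Y)))}),
      ∃ R ∈ 𝒳, ∃ S ∈ 𝒴,
        Q ⊆ RelComp (RelComp (mapRel Sum.inl R ∪ diagRel (X ⊕ Y)) (crossRel x₀ y₀))
              (mapRel Sum.inr S ∪ diagRel (X ⊕ Y)) ∪
            RelComp (RelComp (mapRel Sum.inr S ∪ diagRel (X ⊕ Y)) (crossRel x₀ y₀))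
              (mapRel Sum.inl R ∪ diagRel (X ⊕ Y)) := by
  intro Q hQ
  have key := hQ {Q' | ∃ R ∈ 𝒳, ∃ S ∈ 𝒴, Q' ⊆ Gset x₀ y₀ R S} ?_ ?_
  · obtain ⟨R, hR, S, hS, hsub⟩ := key
    exact ⟨R, hR, S, hS, hsub.trans Gset_subset_F⟩
  · constructor
    · exact ⟨diagRel X, hX.diag_mem, diagRel Y, hY.diag_mem, diag_subset_Gset⟩
    · rintro T ⟨R, hR, S, hS, hsub⟩ T' hT'
      exact ⟨R, hR, S, hS, hT'.trans hsub⟩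
    · rintro T ⟨R, hR, S, hS, hsub⟩
      exact ⟨RelInv R, hX.inv_mem R hR, RelInv S, hY.inv_mem S hS,
        fun p hp => inv_Gset (hsub hp)⟩
    · rintro T ⟨R₁, hR₁, S₁, hS₁, h1⟩ T' ⟨R₂, hR₂, S₂, hS₂, h2⟩
      refine ⟨_, hX.comp_mem _ (hX.union_mem R₁ hR₁ _ hX.diag_mem) _
          (hX.union_mem R₂ hR₂ _ hX.diag_mem),
        _, hY.comp_mem _ (hY.union_mem S₁ hS₁ _ hY.diag_mem) _
          (hY.union_mem S₂ hS₂ _ hY.diag_mem), ?_⟩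
      rintro p ⟨b, hb1, hb2⟩
      exact comp_Gset ⟨b, h1 hb1, h2 hb2⟩
    · rintro T ⟨R₁, hR₁, S₁, hS₁, h1⟩ T' ⟨R₂, hR₂, S₂, hS₂, h2⟩
      refine ⟨R₁ ∪ R₂, hX.union_mem _ hR₁ _ hR₂, S₁ ∪ S₂, hY.union_mem _ hS₁ _ hS₂, ?_⟩
      exact Set.union_subset
        (h1.trans (Gset_mono Set.subset_union_left Set.subset_union_left))
        (h2.trans (Gset_mono Set.subset_union_right Set.subset_union_right))
  · rintro T ((⟨R0, hR0, rfl⟩ | ⟨S0, hS0, rfl⟩) | rfl)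
    · refine ⟨R0, hR0, diagRel Y, hY.diag_mem, ?_⟩
      rintro p ⟨⟨x, x'⟩, hmem, rfl⟩
      exact Or.inl hmem
    · refine ⟨diagRel X, hX.diag_mem, S0, hS0, ?_⟩
      rintro p ⟨⟨y, y'⟩, hmem, rfl⟩
      exact Or.inl hmem
    · refine ⟨diagRel X, hX.diag_mem, diagRel Y, hY.diag_mem, ?_⟩
      rintro p rfl
      exact ⟨Or.inr rfl, Or.inr rfl⟩
end
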